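/- Let H be the 3-uniform hypergraph on vertices {x_1,...,x_6} with hyperedges {x_1,x_2,x_3}, {x_3,x_4,x_5}, {x_5,x_6,x_2} (the bad hypergraph of length 3), and let I = I(H) ⊆ k[x_1,...,x_6]. Then x_1x_2x_3x_4x_5x_6 ∈ I^(2) but x_1x_2x_3x_4x_5x_6 ∉ I^2; in fact I^(2) = I^2 + (x_1x_2x_3x_4x_5x_6). -/

import Mathlib

open MvPolynomial

noncomputable def symbolicPower {R : Type*} [CommRing R] (I : Ideal R) (n : ℕ) : Ideal R :=
  sInf { J : Ideal R | ∃ (p : Ideal R) (hp : p.IsPrime),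
    p ∈ associatedPrimes R (R ⧸ I) ∧
    J = Ideal.comap (algebraMap R (Localization (@Ideal.primeCompl R _ p hp)))
        (Ideal.map (algebraMap R (Localization (@Ideal.primeCompl R _ p hp))) (I ^ n)) }

noncomputable def edgeIdeal (k : Type*) {V : Type*} [CommRing k] [DecidableEq V]
    (E : Finset (Finset V)) : Ideal (MvPolynomial V k) :=
  Ideal.span ((fun e : Finset V => ∏ x ∈ e, (X x : MvPolynomial V k)) '' ↑E)

/-!
Indices are shifted: `X i` is the variable `x_{i+1}`.

An element lies in `I⁽²⁾` iff for every associated prime `p` of `R ⧸ I` some `s ∉ p` multiplies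
it into `I²`. Multiplying `m` by `X 1`, `X 2` or `X 4` lands in `I²`, and no associated prime
`p = (I : r)` contains all three: each monomial of `r` would then contain an edge after adjoining
any one of these variables, which for this hypergraph forces it to contain an edge already, so
`r ∈ I`. Hence `m ∈ I⁽²⁾`. For the weight `(0, 1, 1, 0, 1, 0)` every edge has weight `2`, so `I²`
lives in weight `≥ 4` while `m` has weight `3`; hence `m ∉ I²`.

Conversely, for a minimal vertex cover `T` the prime `P_T = (X i : i ∈ T)` is associated to
`R ⧸ I`, being the annihilator of the class of `∏_{j ∉ T} X j`. Weighted orders add under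
multiplication, so for the indicator weight of `T`, `s ∉ P_T` and `s * f ∈ I²` force every
monomial of `f` to have degree `≥ 2` in the variables of `T`. For the seven minimal vertex
covers of this hypergraph these inequalities make every monomial divisible by a product of two
edges or by `m`.
-/

section SymbolicPower

variable {R : Type*} [CommRing R] {I : Ideal R} {n : ℕ}

theorem mem_symbolicPower_iff {f : R} :
    f ∈ symbolicPower I n ↔ ∀ p ∈ associatedPrimes R (R ⧸ I), ∃ s ∉ p, s * f ∈ I ^ n := by
  simp only [symbolicPower, Submodule.mem_sInf, Set.mem_ofPred_eq]
  constructor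
  · intro h p hp
    have hprime := hp.isPrime
    have hf := h _ ⟨p, hprime, hp, rfl⟩
    rwa [Ideal.mem_comap, IsLocalization.algebraMap_mem_map_algebraMap_iff p.primeCompl] at hf
  · rintro h J ⟨p, hp, hass, rfl⟩
    rw [Ideal.mem_comap, IsLocalization.algebraMap_mem_map_algebraMap_iff p.primeCompl]
    exact h p hass

theorem pow_le_symbolicPower : I ^ n ≤ symbolicPower I n := fun f hf =>
  mem_symbolicPower_iff.mpr fun _ hp => ⟨1, hp.isPrime.one_notMem, by rwa [one_mul]⟩

end SymbolicPower

namespace MvPolynomial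

open Finsupp

section WeightIdeal

variable {σ R : Type*} [CommRing R] (w : σ → ℕ)

noncomputable def weightIdeal (n : ℕ) : Ideal (MvPolynomial σ R) :=
  restrictSupportIdeal R {d | n ≤ weight w d} fun d d' hle (hd : n ≤ weight w d) => by
    obtain ⟨c, rfl⟩ := le_iff_exists_add.mp hle
    exact hd.trans (by simp)

variable {w}

theorem mem_weightIdeal {n : ℕ} {f : MvPolynomial σ R} :
    f ∈ weightIdeal w n ↔ ∀ d ∈ f.support, n ≤ weight w d := by
  change f ∈ restrictSupport R _ ↔ _
  simp [mem_restrictSupport_iff, Set.subset_def]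

theorem mem_weightIdeal_iff_le_weightedOrder {n : ℕ} {f : MvPolynomial σ R} :
    f ∈ weightIdeal w n ↔ n ≤ (f : MvPowerSeries σ R).weightedOrder w := by
  rw [mem_weightIdeal]
  constructor
  · intro h
    refine MvPowerSeries.nat_le_weightedOrder w fun d hd => ?_
    rw [coeff_coe, ← notMem_support_iff]
    exact fun hmem => (h d hmem).not_gt hd
  · intro h d hd
    have hd' : MvPowerSeries.coeff d (f : MvPowerSeries σ R) ≠ 0 := by
      rwa [coeff_coe, ← mem_support_iff]
    exact_mod_cast h.trans (MvPowerSeries.weightedOrder_le w hd')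

theorem weightIdeal_mul_le (m n : ℕ) :
    weightIdeal w m * weightIdeal w n ≤ (weightIdeal w (m + n) : Ideal (MvPolynomial σ R)) := by
  refine Ideal.mul_le.mpr fun f hf g hg => ?_
  rw [mem_weightIdeal_iff_le_weightedOrder] at hf hg ⊢
  rw [coe_mul, Nat.cast_add]
  exact (add_le_add hf hg).trans (MvPowerSeries.le_weightedOrder_mul w)

theorem pow_le_weightIdeal {I : Ideal (MvPolynomial σ R)} {a : ℕ} (h : I ≤ weightIdeal w a) :
    ∀ n : ℕ, I ^ n ≤ weightIdeal w (n * a)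
  | 0 => fun _ _ => mem_weightIdeal.mpr fun _ _ => by rw [zero_mul]; exact Nat.zero_le _
  | n + 1 => by
    rw [pow_succ, add_one_mul]
    exact (Ideal.mul_mono (pow_le_weightIdeal h n) h).trans (weightIdeal_mul_le _ _)

theorem mem_weightIdeal_of_mul_mem [NoZeroDivisors R] {n : ℕ} {s f : MvPolynomial σ R}
    (hs : s ∉ weightIdeal w 1) (hsf : s * f ∈ weightIdeal w n) : f ∈ weightIdeal w n := by
  rw [mem_weightIdeal_iff_le_weightedOrder, Nat.cast_one, not_le, Order.lt_one_iff] at hs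
  rw [mem_weightIdeal_iff_le_weightedOrder, coe_mul, MvPowerSeries.weightedOrder_mul, hs,
    zero_add] at hsf
  exact mem_weightIdeal_iff_le_weightedOrder.mpr hsf

theorem span_X_image_eq_weightIdeal (T : Set σ) :
    Ideal.span (X '' T) = (weightIdeal (T.indicator 1) 1 : Ideal (MvPolynomial σ R)) := by
  ext f
  rw [mem_ideal_span_X_image, mem_weightIdeal]
  refine forall₂_congr fun d _ => ?_
  simp [weight_apply, Finsupp.sum, Nat.one_le_iff_ne_zero, Finset.sum_eq_zero_iff]
  exact exists_congr fun _ => and_comm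

theorem isPrime_span_X_image [IsDomain R] (T : Set σ) :
    (Ideal.span (X '' T) : Ideal (MvPolynomial σ R)).IsPrime := by
  rw [span_X_image_eq_weightIdeal]
  refine ⟨fun h => ?_, fun {a b} hab => or_iff_not_imp_left.mpr fun ha =>
    mem_weightIdeal_of_mul_mem ha hab⟩
  have := mem_weightIdeal.mp ((Ideal.eq_top_iff_one _).mp h) 0
  simp at this

theorem X_mem_span_X_image_iff [Nontrivial R] {T : Set σ} {j : σ} :
    (X j : MvPolynomial σ R) ∈ Ideal.span (X '' T) ↔ j ∈ T := by
  classical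
  simp [mem_ideal_span_X_image, support_X, single_apply]

end WeightIdeal

section EdgeIdeal

variable {k σ : Type*} [CommRing k]

theorem prod_X_eq_monomial (e : Finset σ) :
    ∏ i ∈ e, (X i : MvPolynomial σ k) = monomial (∑ i ∈ e, single i 1) 1 := by
  rw [monomial_sum_one]
  rfl

variable [DecidableEq σ] {E : Finset (Finset σ)}

theorem sum_single_one_apply (e : Finset σ) (j : σ) :
    (∑ i ∈ e, single i 1 : σ →₀ ℕ) j = if j ∈ e then 1 else 0 := by
  simp [Finsupp.finsetSum_apply, single_apply]

theorem prod_X_mem_edgeIdeal {e : Finset σ} (he : e ∈ E) :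
    ∏ i ∈ e, (X i : MvPolynomial σ k) ∈ edgeIdeal k E :=
  Ideal.subset_span ⟨e, he, rfl⟩

theorem prod_X_mul_prod_X_mem_edgeIdeal_sq {e e' : Finset σ} (he : e ∈ E) (he' : e' ∈ E) :
    (∏ i ∈ e, X i) * (∏ i ∈ e', X i) ∈ edgeIdeal k E ^ 2 :=
  pow_two (edgeIdeal k E) ▸ Ideal.mul_mem_mul (prod_X_mem_edgeIdeal he) (prod_X_mem_edgeIdeal he')

theorem mem_edgeIdeal_iff {f : MvPolynomial σ k} :
    f ∈ edgeIdeal k E ↔ ∀ d ∈ f.support, ∃ e ∈ E, e ⊆ d.support := by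
  have : edgeIdeal k E = Ideal.span ((monomial · 1) '' ((∑ i ∈ ·, single i 1) '' ↑E)) := by
    simp_rw [edgeIdeal, prod_X_eq_monomial, Set.image_image]
  rw [this, mem_ideal_span_monomial_image]
  refine forall₂_congr fun d _ => ?_
  simp only [Set.mem_image, Finset.mem_coe, exists_exists_and_eq_and]
  refine exists_congr fun e => and_congr_right fun _ => ?_
  simp only [Finsupp.le_def, sum_single_one_apply, Finset.subset_iff, Finsupp.mem_support_iff]
  refine forall_congr' fun i => ?_
  split_ifs with hi <;> simp [hi, Nat.one_le_iff_ne_zero]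

theorem monomial_mem_edgeIdeal_sq {e e' : Finset σ} (he : e ∈ E) (he' : e' ∈ E) {d : σ →₀ ℕ}
    (hd : ∀ i, (if i ∈ e then 1 else 0) + (if i ∈ e' then 1 else 0) ≤ d i) (c : k) :
    monomial d c ∈ edgeIdeal k E ^ 2 := by
  have hle : ∑ i ∈ e, single i 1 + ∑ i ∈ e', single i 1 ≤ d := fun i => by
    rw [Finsupp.add_apply, sum_single_one_apply, sum_single_one_apply]
    exact hd i
  refine Ideal.mem_of_dvd _ ?_ (prod_X_mul_prod_X_mem_edgeIdeal_sq he he')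
  rw [prod_X_eq_monomial, prod_X_eq_monomial, monomial_mul, one_mul, monomial_dvd_monomial]
  exact ⟨Or.inr hle, one_dvd c⟩

theorem prod_X_dvd_monomial {e : Finset σ} {d : σ →₀ ℕ} (hd : ∀ i ∈ e, d i ≠ 0) (c : k) :
    ∏ i ∈ e, X i ∣ monomial d c := by
  rw [prod_X_eq_monomial, monomial_dvd_monomial]
  refine ⟨Or.inr fun i => ?_, one_dvd c⟩
  rw [sum_single_one_apply]
  split_ifs with hi
  · exact Nat.one_le_iff_ne_zero.mpr (hd i hi)
  · exact Nat.zero_le _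

theorem edgeIdeal_le_weightIdeal {w : σ → ℕ} {a : ℕ} (h : ∀ e ∈ E, a ≤ ∑ i ∈ e, w i) :
    edgeIdeal k E ≤ weightIdeal w a := by
  refine Ideal.span_le.mpr ?_
  rintro _ ⟨e, he, rfl⟩
  change ∏ i ∈ e, X i ∈ weightIdeal w a
  rw [prod_X_eq_monomial, mem_weightIdeal]
  intro d hd
  rw [Finset.mem_singleton.mp (support_monomial_subset hd)]
  simpa [map_sum, weight_single] using h e he

def IsVertexCover (E : Finset (Finset σ)) (T : Finset σ) : Prop :=
  ∀ e ∈ E, (e ∩ T).Nonempty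

def IsMinimalVertexCover (E : Finset (Finset σ)) (T : Finset σ) : Prop :=
  IsVertexCover E T ∧ ∀ i ∈ T, ¬IsVertexCover E (T.erase i)

theorem edgeIdeal_le_span_X_image {T : Finset σ} (hT : IsVertexCover E T) :
    edgeIdeal k E ≤ Ideal.span (X '' ↑T) := by
  refine Ideal.span_le.mpr ?_
  rintro _ ⟨e, he, rfl⟩
  obtain ⟨i, hi⟩ := hT e he
  rw [Finset.mem_inter] at hi
  exact Ideal.mem_of_dvd _ (Finset.dvd_prod_of_mem _ hi.1) (Ideal.subset_span ⟨i, hi.2, rfl⟩)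

theorem span_X_image_mem_associatedPrimes [Fintype σ] [IsDomain k] {T : Finset σ}
    (hT : IsMinimalVertexCover E T) :
    Ideal.span (X '' ↑T) ∈
      associatedPrimes (MvPolynomial σ k) (MvPolynomial σ k ⧸ edgeIdeal k E) := by
  set P : Ideal (MvPolynomial σ k) := Ideal.span (X '' ↑T)
  have hP : P.IsPrime := isPrime_span_X_image _
  set r : MvPolynomial σ k := ∏ j ∈ Tᶜ, X j
  have hr : r ∉ P := by
    simp [r, P, hP.prod_mem_iff, X_mem_span_X_image_iff]
  have hXr : ∀ i ∈ T, X i * r ∈ edgeIdeal k E := by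
    intro i hi
    obtain ⟨e, he, hdisj⟩ : ∃ e ∈ E, ¬(e ∩ T.erase i).Nonempty := by
      simpa [IsVertexCover] using hT.2 i hi
    have hsub : e ⊆ insert i Tᶜ := by
      intro j hj
      by_contra hj'
      simp only [Finset.mem_insert, Finset.mem_compl, not_or, not_not] at hj'
      exact hdisj ⟨j, Finset.mem_inter.mpr ⟨hj, Finset.mem_erase.mpr hj'⟩⟩
    rw [← Finset.prod_insert (Finset.notMem_compl.mpr hi)]
    exact Ideal.mem_of_dvd _ (Finset.prod_dvd_prod_of_subset _ _ _ hsub) (prod_X_mem_edgeIdeal he)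
  have hcolon : ∀ a, a ∈ P ↔ a * r ∈ edgeIdeal k E := by
    refine fun a => ⟨fun ha => ?_, fun h => ?_⟩
    · have : P ≤ (edgeIdeal k E).colon {r} := Ideal.span_le.mpr <| by
        rintro _ ⟨i, hi, rfl⟩
        exact Submodule.mem_colon_singleton.mpr (hXr i hi)
      exact Submodule.mem_colon_singleton.mp (this ha)
    · exact (hP.mem_or_mem (edgeIdeal_le_span_X_image hT.1 h)).resolve_right hr
  refine ⟨hP, Ideal.Quotient.mk _ r, ?_⟩
  have : Submodule.colon (⊥ : Submodule _ (MvPolynomial σ k ⧸ edgeIdeal k E))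
      {Ideal.Quotient.mk _ r} = P := by
    ext a
    rw [Submodule.mem_colon_singleton, Submodule.mem_bot, hcolon, ← Ideal.Quotient.eq_zero_iff_mem]
    rfl
  rw [this, hP.radical]

theorem le_sum_of_mem_symbolicPower [Fintype σ] [IsDomain k] {T : Finset σ}
    (hT : IsMinimalVertexCover E T) {n : ℕ}
    {f : MvPolynomial σ k} (hf : f ∈ symbolicPower (edgeIdeal k E) n) :
    ∀ d ∈ f.support, n ≤ ∑ i ∈ T, d i := by
  obtain ⟨s, hs, hsf⟩ := mem_symbolicPower_iff.mp hf _ (span_X_image_mem_associatedPrimes hT)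
  have hP := span_X_image_eq_weightIdeal (R := k) (T : Set σ)
  have hsf' : s * f ∈ weightIdeal ((T : Set σ).indicator 1) n := by
    simpa using pow_le_weightIdeal ((edgeIdeal_le_span_X_image hT.1).trans hP.le) n hsf
  intro d hd
  simpa [weight_eq_sum, Set.indicator_apply] using
    mem_weightIdeal.mp (mem_weightIdeal_of_mul_mem (hP ▸ hs) hsf') d hd

theorem mem_edgeIdeal_of_forall_X_mul_mem {U : Finset σ}
    (hU : ∀ A : Finset σ, (∀ i ∈ U, ∃ e ∈ E, e ⊆ insert i A) → ∃ e ∈ E, e ⊆ A)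
    {r : MvPolynomial σ k} (hr : ∀ i ∈ U, X i * r ∈ edgeIdeal k E) : r ∈ edgeIdeal k E := by
  simp only [mem_edgeIdeal_iff] at hr ⊢
  refine fun d hd => hU _ fun i hi => ?_
  have hmem : single i 1 + d ∈ (X i * r).support := by
    rwa [mem_support_iff, coeff_X_mul, ← mem_support_iff]
  simpa [support_add_eq_union, support_single] using hr i hi _ hmem

theorem exists_X_notMem_of_mem_associatedPrimes [Finite σ] [IsNoetherianRing k] {U : Finset σ}
    (hU : ∀ A : Finset σ, (∀ i ∈ U, ∃ e ∈ E, e ⊆ insert i A) → ∃ e ∈ E, e ⊆ A)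
    {p : Ideal (MvPolynomial σ k)}
    (hp : p ∈ associatedPrimes (MvPolynomial σ k) (MvPolynomial σ k ⧸ edgeIdeal k E)) :
    ∃ i ∈ U, X i ∉ p := by
  obtain ⟨hprime, x, rfl⟩ := isAssociatedPrime_iff.mp hp
  obtain ⟨r, rfl⟩ := Ideal.Quotient.mk_surjective x
  have hcolon : ∀ a, a ∈ Submodule.colon ⊥ {Ideal.Quotient.mk (edgeIdeal k E) r} ↔
      a * r ∈ edgeIdeal k E := fun a => by
    rw [Submodule.mem_colon_singleton, Submodule.mem_bot, ← Ideal.Quotient.eq_zero_iff_mem]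
    rfl
  by_contra! h
  refine hprime.ne_top ((Ideal.eq_top_iff_one _).mpr ((hcolon 1).mpr ?_))
  rw [one_mul]
  exact mem_edgeIdeal_of_forall_X_mul_mem hU fun i hi => (hcolon _).mp (h i hi)

theorem mem_symbolicPower_of_forall_X_mul_mem [Finite σ] [IsNoetherianRing k] {U : Finset σ}
    (hU : ∀ A : Finset σ, (∀ i ∈ U, ∃ e ∈ E, e ⊆ insert i A) → ∃ e ∈ E, e ⊆ A) {n : ℕ}
    {f : MvPolynomial σ k} (hf : ∀ i ∈ U, X i * f ∈ edgeIdeal k E ^ n) :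
    f ∈ symbolicPower (edgeIdeal k E) n :=
  mem_symbolicPower_iff.mpr fun _ hp =>
    let ⟨i, hi, hXi⟩ := exists_X_notMem_of_mem_associatedPrimes hU hp
    ⟨X i, hXi, hf i hi⟩

end EdgeIdeal

end MvPolynomial

def badHypergraph : Finset (Finset (Fin 6)) := {{0, 1, 2}, {2, 3, 4}, {4, 5, 1}}

def badHypergraphMinimalCovers : Finset (Finset (Fin 6)) :=
  {{1, 2}, {2, 4}, {1, 4}, {2, 5}, {0, 4}, {1, 3}, {0, 3, 5}}

theorem isMinimalVertexCover_of_mem_badHypergraphMinimalCovers :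
    ∀ T ∈ badHypergraphMinimalCovers, IsMinimalVertexCover badHypergraph T := by
  unfold IsMinimalVertexCover IsVertexCover
  decide

section BadHypergraph

variable {k : Type*} [Field k]

theorem span_eq_edgeIdeal_badHypergraph :
    Ideal.span {X 0 * X 1 * X 2, X 2 * X 3 * X 4, X 4 * X 5 * X 1} =
      edgeIdeal k badHypergraph := by
  simp [edgeIdeal, badHypergraph, Set.image_insert_eq, mul_assoc]

theorem prod_X_mem_symbolicPower_badHypergraph :
    ∏ i, (X i : MvPolynomial (Fin 6) k) ∈ symbolicPower (edgeIdeal k badHypergraph) 2 := by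
  refine mem_symbolicPower_of_forall_X_mul_mem (U := {1, 2, 4}) (by decide) fun i hi => ?_
  fin_cases hi
  · rw [show (X 1 : MvPolynomial (Fin 6) k) * ∏ i, X i =
        (∏ i ∈ {0, 1, 2}, X i) * (∏ i ∈ {4, 5, 1}, X i) * X 3 by simp [Fin.prod_univ_six]; ring]
    exact Ideal.mul_mem_right _ _ (prod_X_mul_prod_X_mem_edgeIdeal_sq (by decide) (by decide))
  · rw [show (X 2 : MvPolynomial (Fin 6) k) * ∏ i, X i =
        (∏ i ∈ {0, 1, 2}, X i) * (∏ i ∈ {2, 3, 4}, X i) * X 5 by simp [Fin.prod_univ_six]; ring]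
    exact Ideal.mul_mem_right _ _ (prod_X_mul_prod_X_mem_edgeIdeal_sq (by decide) (by decide))
  · rw [show (X 4 : MvPolynomial (Fin 6) k) * ∏ i, X i =
        (∏ i ∈ {2, 3, 4}, X i) * (∏ i ∈ {4, 5, 1}, X i) * X 0 by simp [Fin.prod_univ_six]; ring]
    exact Ideal.mul_mem_right _ _ (prod_X_mul_prod_X_mem_edgeIdeal_sq (by decide) (by decide))

theorem prod_X_notMem_edgeIdeal_badHypergraph_sq :
    ∏ i, (X i : MvPolynomial (Fin 6) k) ∉ edgeIdeal k badHypergraph ^ 2 := by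
  have h4 : edgeIdeal k badHypergraph ^ 2 ≤ weightIdeal ![0, 1, 1, 0, 1, 0] 4 :=
    pow_le_weightIdeal (edgeIdeal_le_weightIdeal (a := 2) (by decide)) 2
  intro hm
  have := mem_weightIdeal.mp (h4 hm) (∑ i, Finsupp.single i 1)
    (by rw [prod_X_eq_monomial, mem_support_iff, coeff_monomial, if_pos rfl]; exact one_ne_zero)
  simp [Finsupp.weight_single, Fin.sum_univ_six] at this

theorem monomial_mem_badHypergraph (d : Fin 6 →₀ ℕ) (c : k)
    (h : ∀ T ∈ badHypergraphMinimalCovers, 2 ≤ ∑ i ∈ T, d i) :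
    monomial d c ∈ edgeIdeal k badHypergraph ^ 2 ⊔ Ideal.span {∏ i, X i} := by
  simp only [badHypergraphMinimalCovers, Finset.mem_insert, Finset.mem_singleton, forall_eq_or_imp,
    forall_eq, Finset.sum_insert, Finset.sum_singleton, Fin.reduceEq, not_false_eq_true,
    or_self] at h
  have cases : (2 ≤ d 0 ∧ 2 ≤ d 1 ∧ 2 ≤ d 2) ∨
      (1 ≤ d 0 ∧ 1 ≤ d 1 ∧ 2 ≤ d 2 ∧ 1 ≤ d 3 ∧ 1 ≤ d 4) ∨
      (1 ≤ d 0 ∧ 2 ≤ d 1 ∧ 1 ≤ d 2 ∧ 1 ≤ d 4 ∧ 1 ≤ d 5) ∨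
      (2 ≤ d 2 ∧ 2 ≤ d 3 ∧ 2 ≤ d 4) ∨
      (1 ≤ d 1 ∧ 1 ≤ d 2 ∧ 1 ≤ d 3 ∧ 2 ≤ d 4 ∧ 1 ≤ d 5) ∨
      (2 ≤ d 1 ∧ 2 ≤ d 4 ∧ 2 ≤ d 5) ∨
      (1 ≤ d 0 ∧ 1 ≤ d 1 ∧ 1 ≤ d 2 ∧ 1 ≤ d 3 ∧ 1 ≤ d 4 ∧ 1 ≤ d 5) := by
    omega
  rcases cases with hd | hd | hd | hd | hd | hd | hd
  · exact Ideal.mem_sup_left <| monomial_mem_edgeIdeal_sq (e := {0, 1, 2}) (e' := {0, 1, 2})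
      (by decide) (by decide) (fun i => by fin_cases i <;> simp <;> omega) c
  · exact Ideal.mem_sup_left <| monomial_mem_edgeIdeal_sq (e := {0, 1, 2}) (e' := {2, 3, 4})
      (by decide) (by decide) (fun i => by fin_cases i <;> simp <;> omega) c
  · exact Ideal.mem_sup_left <| monomial_mem_edgeIdeal_sq (e := {0, 1, 2}) (e' := {4, 5, 1})
      (by decide) (by decide) (fun i => by fin_cases i <;> simp <;> omega) c
  · exact Ideal.mem_sup_left <| monomial_mem_edgeIdeal_sq (e := {2, 3, 4}) (e' := {2, 3, 4})
      (by decide) (by decide) (fun i => by fin_cases i <;> simp <;> omega) c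
  · exact Ideal.mem_sup_left <| monomial_mem_edgeIdeal_sq (e := {2, 3, 4}) (e' := {4, 5, 1})
      (by decide) (by decide) (fun i => by fin_cases i <;> simp <;> omega) c
  · exact Ideal.mem_sup_left <| monomial_mem_edgeIdeal_sq (e := {4, 5, 1}) (e' := {4, 5, 1})
      (by decide) (by decide) (fun i => by fin_cases i <;> simp <;> omega) c
  · exact Ideal.mem_sup_right <| Ideal.mem_span_singleton.mpr <|
      prod_X_dvd_monomial (fun i _ => by fin_cases i <;> simp <;> omega) c

theorem symbolicPower_badHypergraph_le :
    symbolicPower (edgeIdeal k badHypergraph) 2 ≤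
      edgeIdeal k badHypergraph ^ 2 ⊔ Ideal.span {∏ i, X i} := by
  intro f hf
  rw [f.as_sum]
  refine Ideal.sum_mem _ fun d hd => monomial_mem_badHypergraph d _ fun T hT => ?_
  exact le_sum_of_mem_symbolicPower
    (isMinimalVertexCover_of_mem_badHypergraphMinimalCovers T hT) hf d hd

end BadHypergraph

/-- for the bad hypergraph of length 3 with edge ideal
I = (x₁x₂x₃, x₃x₄x₅, x₅x₆x₂), the product of all six variables lies in I⁽²⁾ but
not in I², and I⁽²⁾ = I² + (x₁x₂x₃x₄x₅x₆). -/
theorem stmt5 {k : Type*} [Field k] :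
    let I : Ideal (MvPolynomial (Fin 6) k) :=
      Ideal.span {X 0 * X 1 * X 2, X 2 * X 3 * X 4, X 4 * X 5 * X 1}
    let m : MvPolynomial (Fin 6) k := X 0 * X 1 * X 2 * X 3 * X 4 * X 5
    m ∈ symbolicPower I 2 ∧ m ∉ I ^ 2 ∧
      symbolicPower I 2 = I ^ 2 ⊔ Ideal.span {m} := by
  intro I m
  have hI : I = edgeIdeal k badHypergraph := span_eq_edgeIdeal_badHypergraph
  have hm : m = ∏ i, X i := by simp [m, Fin.prod_univ_six, mul_assoc]
  rw [hI, hm]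
  refine ⟨prod_X_mem_symbolicPower_badHypergraph, prod_X_notMem_edgeIdeal_badHypergraph_sq,
    le_antisymm symbolicPower_badHypergraph_le (sup_le pow_le_symbolicPower ?_)⟩
  exact (Ideal.span_singleton_le_iff_mem _).mpr prod_X_mem_symbolicPower_badHypergraph
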